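/- Let {B(k)}_{k∈ℕ} be a sequence of n×n column-stochastic real matrices, let T ≥ 1 be an integer and θ ∈ (0, 1], and suppose that for every k ∈ ℕ every entry of the product Φ_T(k) = B(k+T−1)B(k+T−2)···B(k) is at least θ. Then for every k and t there exists a stochastic vector φ_t(k) ∈ ℝ^n such that |[Φ_t(k)]_{ij} − [φ_t(k)]_i| ≤ 2(1 − θ)^{⌊t/T⌋} for all i, j; that is, the products Φ_t(k) approach a rank-one matrix φ_t(k)·1ᵀ at a geometric rate in t. -/

import Mathlib

/-!
Products of column-stochastic matrices are column-stochastic, so every column of `Φ_t(k)` is a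
stochastic vector; take `φ_t(k)` to be the first one. It then suffices to show that the spread
`max_j − min_j` of every row of `Φ_t(k)` is at most `(1 − θ)^⌊t/T⌋`. Write
`Φ_{t+T}(k) = Φ_t(k+T) Φ_T(k)`: a row of the product is a row of `Φ_t(k+T)` times a
column-stochastic matrix `D` with entries `≥ θ`. Any two columns of `D` share mass
`∑_l min(D_lj, D_lj') ≥ θ`, so the spread of the row contracts by the factor `1 − θ`
(Doeblin's argument).
-/

/-- Backward product of a sequence of matrices:
`backProd B t k = B(k+t−1)·B(k+t−2)···B(k)`, with `backProd B 0 k = I`. -/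
def backProd {n : ℕ} (B : ℕ → Matrix (Fin n) (Fin n) ℝ) : ℕ → ℕ → Matrix (Fin n) (Fin n) ℝ
  | 0, _ => 1
  | t + 1, k => B (k + t) * backProd B t k

open Matrix Finset

theorem backProd_add {n : ℕ} (B : ℕ → Matrix (Fin n) (Fin n) ℝ) (a b k : ℕ) :
    backProd B (a + b) k = backProd B a (k + b) * backProd B b k := by
  induction a with
  | zero => simp [backProd]
  | succ a ih =>
    rw [Nat.add_right_comm, backProd, backProd, ih, Nat.add_assoc, Nat.add_comm b a,
      Matrix.mul_assoc]

theorem backProd_mem_colStochastic {n : ℕ} {B : ℕ → Matrix (Fin n) (Fin n) ℝ}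
    (hB : ∀ k, B k ∈ colStochastic ℝ (Fin n)) (t k : ℕ) :
    backProd B t k ∈ colStochastic ℝ (Fin n) := by
  induction t with
  | zero => exact one_mem _
  | succ t ih => exact mul_mem (hB _) ih

section Contraction

variable {ι : Type*} [Fintype ι] [DecidableEq ι] [Nonempty ι] {D : Matrix ι ι ℝ} {θ : ℝ}

theorem sum_max_sub_zero_le_of_mem_colStochastic (hD : D ∈ colStochastic ℝ ι)
    (hθ : ∀ i j, θ ≤ D i j) (j j' : ι) :
    ∑ l, max (D l j - D l j') 0 ≤ 1 - θ := by
  have hmin : θ ≤ ∑ l, min (D l j) (D l j') :=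
    (le_min (hθ _ j) (hθ _ j')).trans <| single_le_sum
      (fun l _ => le_min (hD.1 l j) (hD.1 l j')) (mem_univ (Classical.arbitrary ι))
  calc ∑ l, max (D l j - D l j') 0 = ∑ l, (D l j - min (D l j) (D l j')) := by
        refine sum_congr rfl fun l _ => ?_
        rcases le_total (D l j) (D l j') with h | h <;> simp [h]
    _ = 1 - ∑ l, min (D l j) (D l j') := by
        rw [sum_sub_distrib, sum_col_of_mem_colStochastic hD]
    _ ≤ 1 - θ := by linarith

theorem vecMul_sub_vecMul_le_of_mem_colStochastic {x : ι → ℝ} {c : ℝ}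
    (hx : ∀ l l', x l - x l' ≤ c) (hD : D ∈ colStochastic ℝ ι)
    (hθ : ∀ i j, θ ≤ D i j) (j j' : ι) :
    (x ᵥ* D) j - (x ᵥ* D) j' ≤ (1 - θ) * c := by
  obtain ⟨l₀, hl₀⟩ := Finite.exists_min x
  have hc : 0 ≤ c := by simpa using hx l₀ l₀
  calc (x ᵥ* D) j - (x ᵥ* D) j' = ∑ l, (x l - x l₀) * (D l j - D l j') := by
        simp only [vecMul, dotProduct, sub_mul, mul_sub, sum_sub_distrib, ← mul_sum,
          sum_col_of_mem_colStochastic hD]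
        ring
    _ ≤ ∑ l, c * max (D l j - D l j') 0 := by
        refine sum_le_sum fun l _ => ?_
        calc (x l - x l₀) * (D l j - D l j') ≤ (x l - x l₀) * max (D l j - D l j') 0 :=
              mul_le_mul_of_nonneg_left (le_max_left _ _) (sub_nonneg.2 (hl₀ l))
          _ ≤ c * max (D l j - D l j') 0 :=
              mul_le_mul_of_nonneg_right (hx l l₀) (le_max_right _ _)
    _ = c * ∑ l, max (D l j - D l j') 0 := (mul_sum ..).symm
    _ ≤ c * (1 - θ) :=
        mul_le_mul_of_nonneg_left (sum_max_sub_zero_le_of_mem_colStochastic hD hθ j j') hc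
    _ = (1 - θ) * c := mul_comm _ _

end Contraction

theorem backProd_sub_le_pow {n : ℕ} [NeZero n] {B : ℕ → Matrix (Fin n) (Fin n) ℝ}
    (hB : ∀ k, B k ∈ colStochastic ℝ (Fin n)) {T : ℕ} {θ : ℝ}
    (hpos : ∀ k i j, θ ≤ backProd B T k i j) (q r k : ℕ) (i j j' : Fin n) :
    backProd B (q * T + r) k i j - backProd B (q * T + r) k i j' ≤ (1 - θ) ^ q := by
  induction q generalizing k i j j' with
  | zero =>
    have hΦ := backProd_mem_colStochastic hB r k
    simp only [zero_mul, zero_add, pow_zero]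
    linarith [le_one_of_mem_colStochastic hΦ (i := j) (j := i), hΦ.1 i j']
  | succ q ih =>
    rw [Nat.succ_mul, Nat.add_right_comm, backProd_add, pow_succ']
    -- `(M * D) i j` is definitionally `(M i ᵥ* D) j`.
    exact vecMul_sub_vecMul_le_of_mem_colStochastic (ih (k + T) i)
      (backProd_mem_colStochastic hB T k) (hpos k) j j'

theorem col_stochastic_backProd_ergodic_general (n : ℕ) (hn : 0 < n)
    (B : ℕ → Matrix (Fin n) (Fin n) ℝ)
    (hnonneg : ∀ k i j, 0 ≤ B k i j)
    (hcol : ∀ k j, ∑ i, B k i j = 1)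
    (T : ℕ) (θ : ℝ)
    (hpos : ∀ k i j, θ ≤ backProd B T k i j) :
    ∀ k t, ∃ φ : Fin n → ℝ, (∀ i, 0 ≤ φ i) ∧ (∑ i, φ i = 1) ∧
      ∀ i j, |backProd B t k i j - φ i| ≤ 2 * (1 - θ) ^ (t / T) := by
  intro k t
  have : NeZero n := ⟨hn.ne'⟩
  have hB k : B k ∈ colStochastic ℝ (Fin n) := mem_colStochastic_iff_sum.2 ⟨hnonneg k, hcol k⟩
  have hΦ := backProd_mem_colStochastic hB t k
  have hosc : ∀ i j j', backProd B t k i j - backProd B t k i j' ≤ (1 - θ) ^ (t / T) := by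
    simpa only [Nat.div_add_mod'] using backProd_sub_le_pow hB hpos (t / T) (t % T) k
  refine ⟨fun i => backProd B t k i 0, fun i => hΦ.1 i 0, sum_col_of_mem_colStochastic hΦ 0,
    fun i j => abs_sub_le_iff.2 ⟨?_, ?_⟩⟩ <;>
  linarith [hosc i j 0, hosc i 0 j, hosc i 0 0]

/-- **Lemma 2(a) of the paper (column-stochastic version).** Let `{B(k)}` be
column-stochastic matrices such that every entry of every length-`T` backward product
`Φ_T(k)` is at least `θ ∈ (0,1]`. Then for all `k, t` there is a stochastic vector
`φ_t(k)` with `|[Φ_t(k)]_{ij} − [φ_t(k)]_i| ≤ 2(1 − θ)^{⌊t/T⌋}`; i.e. `Φ_t(k)`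
approaches the rank-one matrix `φ_t(k)·1ᵀ` geometrically in `t`. -/
theorem col_stochastic_backProd_ergodic (n : ℕ) (hn : 0 < n)
    (B : ℕ → Matrix (Fin n) (Fin n) ℝ)
    (hnonneg : ∀ k i j, 0 ≤ B k i j)
    (hcol : ∀ k j, ∑ i, B k i j = 1)
    (T : ℕ) (hT : 1 ≤ T) (θ : ℝ) (hθ0 : 0 < θ) (hθ1 : θ ≤ 1)
    (hpos : ∀ k i j, θ ≤ backProd B T k i j) :
    ∀ k t, ∃ φ : Fin n → ℝ, (∀ i, 0 ≤ φ i) ∧ (∑ i, φ i = 1) ∧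
      ∀ i j, |backProd B t k i j - φ i| ≤ 2 * (1 - θ) ^ (t / T) :=
  col_stochastic_backProd_ergodic_general n hn B hnonneg hcol T θ hpos
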